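/- arXiv:math/0403522 — 4 statements merged into one kernel-verified Lean document; each statement's English description precedes it below -/
import Mathlib

section
/- Let α > 0 be a real quadratic irrational which is a unit in the ring of integers of Q(α). Then the period lengths of the continued fraction expansions of α^n, for n = 1, 2, 3, …, are bounded. -/
/-- The Gauss map iteration underlying the continued fraction algorithm:
`x_0 = x` and `x_{k+1} = 1/(x_k - ⌊x_k⌋)`. -/
noncomputable def gaussIter (x : ℝ) : ℕ → ℝ
  | 0 => x
  | k + 1 => (gaussIter x k - ⌊gaussIter x k⌋)⁻¹

/-- The `k`-th partial quotient of the continued fraction expansion of `x`. -/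
noncomputable def cfPartialQuotient (x : ℝ) (k : ℕ) : ℤ := ⌊gaussIter x k⌋

/-- A sequence is eventually periodic with period `p > 0`. -/
def IsEventuallyPeriodicWith (a : ℕ → ℤ) (p : ℕ) : Prop :=
  0 < p ∧ ∃ N : ℕ, ∀ k ≥ N, a (k + p) = a k

/-- The length of the (shortest eventual) period of a sequence. -/
noncomputable def periodLength (a : ℕ → ℤ) : ℕ :=
  sInf {p : ℕ | IsEventuallyPeriodicWith a p}

/-- The period length of the continued fraction expansion of a real number. -/
noncomputable def cfPeriodLength (x : ℝ) : ℕ := periodLength (cfPartialQuotient x)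

lemma gauss_succ (x : ℝ) (k : ℕ) :
    gaussIter x (k+1) = (gaussIter x k - ⌊gaussIter x k⌋)⁻¹ := rfl

lemma ep_of_quad (β : ℝ) (hβ : 1 < β) (b c : ℤ) (hc : c = 1 ∨ c = -1)
    (hrel : β^2 + b*β + c = 0) : IsEventuallyPeriodicWith (cfPartialQuotient β) 2 := by
  have hβ0 : (0:ℝ) < β := lt_trans one_pos hβ
  have hβne : β ≠ 0 := ne_of_gt hβ0
  have hmul : β * β⁻¹ = 1 := mul_inv_cancel₀ hβne
  have hinv0 : 0 < β⁻¹ := inv_pos.mpr hβ0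
  have hinv1 : β⁻¹ < 1 := by nlinarith
  rcases hc with hc | hc
  · -- c = 1 : β + β⁻¹ = t with t = -b
    subst hc
    push_cast at hrel
    have hsum : β + β⁻¹ = -(b:ℝ) := by
      field_simp
      linear_combination hrel
    have ht2 : (2:ℝ) < -(b:ℝ) := by
      nlinarith [mul_pos (sub_pos.mpr hβ) (sub_pos.mpr hβ)]
    have ht3 : (3:ℤ) ≤ -b := by
      have : (2:ℤ) < -b := by exact_mod_cast ht2
      omega
    have ht3' : (3:ℝ) ≤ -(b:ℝ) := by exact_mod_cast ht3
    have hβ2 : 2 < β := by nlinarith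
    have hhalf : β⁻¹ < 1/2 := by nlinarith
    have hf0 : ⌊β⌋ = -b - 1 := by
      rw [Int.floor_eq_iff]
      push_cast
      constructor <;> nlinarith
    have h1β : (0:ℝ) < 1 - β⁻¹ := by linarith
    have h1βne : (1:ℝ) - β⁻¹ ≠ 0 := ne_of_gt h1β
    have e1 : gaussIter β 1 = (1 - β⁻¹)⁻¹ := by
      rw [gauss_succ]
      show (gaussIter β 0 - (⌊gaussIter β 0⌋ : ℝ))⁻¹ = _
      show (β - (⌊β⌋ : ℝ))⁻¹ = _
      rw [hf0]
      push_cast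
      congr 1
      linarith
    have hy := mul_inv_cancel₀ h1βne
    have hy0 : 0 < (1 - β⁻¹)⁻¹ := inv_pos.mpr h1β
    have hylt : (1 - β⁻¹)⁻¹ < 2 := by nlinarith
    have hygt : 1 < (1 - β⁻¹)⁻¹ := by nlinarith
    have hf1 : ⌊(1 - β⁻¹)⁻¹⌋ = 1 := by
      rw [Int.floor_eq_iff] <;> push_cast <;> constructor <;> linarith
    have hβ1ne : β - 1 ≠ 0 := by intro h; nlinarith
    have e2 : gaussIter β 2 = β - 1 := by
      rw [gauss_succ, e1, hf1]
      push_cast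
      refine inv_eq_of_mul_eq_one_right ?_
      field_simp
      ring
    have hf2 : ⌊β - 1⌋ = -b - 2 := by
      rw [Int.floor_eq_iff]
      push_cast
      constructor <;> nlinarith
    have e3 : gaussIter β 3 = gaussIter β 1 := by
      rw [gauss_succ, e2, hf2, e1]
      push_cast
      congr 1
      linarith
    have hper : ∀ k, gaussIter β (k+3) = gaussIter β (k+1) := by
      intro k
      induction k with
      | zero => exact e3
      | succ k ih =>
        show (gaussIter β (k+3) - (⌊gaussIter β (k+3)⌋:ℝ))⁻¹
            = (gaussIter β (k+1) - (⌊gaussIter β (k+1)⌋:ℝ))⁻¹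
        rw [ih]
    refine ⟨two_pos, 1, fun k hk => ?_⟩
    obtain ⟨m, rfl⟩ := Nat.exists_eq_add_of_le hk
    simp only [cfPartialQuotient]
    rw [show 1 + m + 2 = m + 3 from by omega, show 1 + m = m + 1 from by omega, hper m]
  · -- c = -1 : β = -b + β⁻¹
    subst hc
    push_cast at hrel
    have key : β + (b:ℝ) = β⁻¹ := by
      field_simp
      linear_combination hrel
    have hf : ⌊β⌋ = -b := by
      rw [Int.floor_eq_iff]
      push_cast
      constructor <;> linarith
    have hg : ∀ k, gaussIter β k = β := by
      intro k
      induction k with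
      | zero => rfl
      | succ k ih =>
        rw [gauss_succ, ih, hf]
        push_cast
        rw [show β - -(b:ℝ) = β⁻¹ from by linarith, inv_inv]
    exact ⟨two_pos, 0, fun k _ => by simp only [cfPartialQuotient, hg]⟩

lemma ep_shift (β : ℝ) (h0 : 0 < β) (h1 : β < 1) {p : ℕ}
    (h : IsEventuallyPeriodicWith (cfPartialQuotient β⁻¹) p) :
    IsEventuallyPeriodicWith (cfPartialQuotient β) p := by
  obtain ⟨hp, N, hN⟩ := h
  have hfl : ⌊β⌋ = 0 := by
    rw [Int.floor_eq_zero_iff]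
    exact ⟨h0.le, h1⟩
  have hg : ∀ k, gaussIter β (k+1) = gaussIter β⁻¹ k := by
    intro k
    induction k with
    | zero =>
      show (gaussIter β 0 - (⌊gaussIter β 0⌋:ℝ))⁻¹ = β⁻¹
      show (β - (⌊β⌋:ℝ))⁻¹ = β⁻¹
      rw [hfl]
      norm_num
    | succ k ih =>
      show (gaussIter β (k+1) - (⌊gaussIter β (k+1)⌋:ℝ))⁻¹ = _
      rw [ih]
      rfl
  refine ⟨hp, N+1, fun k hk => ?_⟩
  obtain ⟨m, rfl⟩ : ∃ m, k = m + 1 := ⟨k - 1, by omega⟩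
  simp only [cfPartialQuotient]
  rw [show m + 1 + p = (m + p) + 1 from by omega, hg, hg]
  exact hN m (by omega)

lemma unit_irrational (γ : ℝ) (h1 : IsIntegral ℤ γ) (h2 : IsIntegral ℤ γ⁻¹)
    (h3 : 0 < γ) (h4 : γ ≠ 1) : ∀ q : ℚ, (q : ℝ) ≠ γ := by
  intro q hq
  have hq0 : q ≠ 0 := by
    intro h
    rw [h] at hq
    simp at hq
    exact absurd hq.symm (ne_of_gt h3)
  have hqi : IsIntegral ℤ q := by
    rw [← hq] at h1
    exact (isIntegral_algebraMap_iff (algebraMap ℚ ℝ).injective).mp h1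
  have hqi' : IsIntegral ℤ (q⁻¹) := by
    have : (algebraMap ℚ ℝ) q⁻¹ = γ⁻¹ := by
      rw [← hq]
      simp
    rw [← this] at h2
    exact (isIntegral_algebraMap_iff (algebraMap ℚ ℝ).injective).mp h2
  obtain ⟨m, hm⟩ := IsIntegrallyClosed.isIntegral_iff.mp hqi
  obtain ⟨m', hm'⟩ := IsIntegrallyClosed.isIntegral_iff.mp hqi'
  have hm2 : (m:ℚ) = q := by rw [← hm]; simp
  have hm2' : (m':ℚ) = q⁻¹ := by rw [← hm']; simp
  have hmm : m * m' = 1 := by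
    have : ((m * m' : ℤ) : ℚ) = 1 := by push_cast; rw [hm2, hm2']; field_simp
    exact_mod_cast this
  have : m = 1 ∨ m = -1 := Int.eq_one_or_neg_one_of_mul_eq_one hmm
  rcases this with h | h
  · apply h4
    rw [← hq, ← hm2, h]
    norm_num
  · have : γ = -1 := by
      rw [← hq, ← hm2, h]
      norm_num
    rw [this] at h3
    norm_num at h3

open Polynomial in
lemma quad_rel (γ : ℝ) (h1 : IsIntegral ℤ γ) (hirr : ∀ q : ℚ, (q : ℝ) ≠ γ)
    (hd : (minpoly ℚ γ).natDegree ≤ 2) :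
    ∃ b c : ℤ, γ^2 + (b:ℝ)*γ + (c:ℝ) = 0 := by
  have hQ : IsIntegral ℚ γ := h1.tower_top
  have hnr : γ ∉ (algebraMap ℚ ℝ).range := by
    rintro ⟨q, rfl⟩
    exact hirr q (by simp)
  have h2 : (minpoly ℚ γ).natDegree = 2 :=
    le_antisymm hd ((minpoly.two_le_natDegree_iff hQ).mpr hnr)
  have hmap : minpoly ℚ γ = (minpoly ℤ γ).map (algebraMap ℤ ℚ) :=
    minpoly.isIntegrallyClosed_eq_field_fractions' ℚ h1
  have hn : (minpoly ℤ γ).natDegree = 2 := by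
    rw [hmap, (minpoly.monic h1).natDegree_map] at h2
    exact h2
  refine ⟨(minpoly ℤ γ).coeff 1, (minpoly ℤ γ).coeff 0, ?_⟩
  have hlead : (minpoly ℤ γ).coeff 2 = 1 := by
    have hm := minpoly.monic h1
    rw [Polynomial.Monic, Polynomial.leadingCoeff, hn] at hm
    exact hm
  have h0 := minpoly.aeval ℤ γ
  rw [Polynomial.aeval_eq_sum_range, hn] at h0
  simp [Finset.sum_range_succ, hlead] at h0
  linarith

open Polynomial in
lemma key_quadratic (γ : ℝ) (h1 : IsIntegral ℤ γ) (h2 : IsIntegral ℤ γ⁻¹)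
    (hirr : ∀ q : ℚ, (q : ℝ) ≠ γ) (hirr' : ∀ q : ℚ, (q : ℝ) ≠ γ⁻¹)
    (hd : (minpoly ℚ γ).natDegree ≤ 2) (hd' : (minpoly ℚ γ⁻¹).natDegree ≤ 2) :
    ∃ b c : ℤ, (c = 1 ∨ c = -1) ∧ γ^2 + (b:ℝ)*γ + (c:ℝ) = 0 := by
  obtain ⟨b, c, hrel⟩ := quad_rel γ h1 hirr hd
  obtain ⟨b', c', hrel'⟩ := quad_rel γ⁻¹ h2 hirr' hd'
  have hγne : γ ≠ 0 := by
    intro h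
    exact hirr 0 (by simp [h])
  have h3 : (c':ℝ)*γ^2 + (b':ℝ)*γ + 1 = 0 := by
    have e : γ⁻¹ * γ = 1 := inv_mul_cancel₀ hγne
    linear_combination (γ^2) * hrel' - ((b':ℝ)*γ + 1 + γ*γ⁻¹) * e
  have hlin : ((b' - c'*b : ℤ):ℝ)*γ = ((c'*c - 1 : ℤ):ℝ) := by
    push_cast
    linear_combination h3 - (c':ℝ) * hrel
  by_cases he : (b' - c'*b : ℤ) = 0
  · have hf : ((c'*c - 1 : ℤ):ℝ) = 0 := by
      rw [he] at hlin
      push_cast at hlin ⊢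
      linarith
    have hf' : c'*c - 1 = 0 := by exact_mod_cast hf
    have : c * c' = 1 := by rw [mul_comm]; linarith
    refine ⟨b, c, Int.eq_one_or_neg_one_of_mul_eq_one this, hrel⟩
  · exfalso
    apply hirr (((c'*c - 1 : ℤ):ℚ) / ((b' - c'*b : ℤ):ℚ))
    have hne : ((b' - c'*b : ℤ):ℝ) ≠ 0 := by exact_mod_cast he
    push_cast
    push_cast at hlin hne
    field_simp
    linarith


open IntermediateField

/-- **Theorem 2, third part.** Let `α > 0` be a real quadratic irrational which is a unit
in the ring of integers of `ℚ(α)`. Then the period lengths of the continued fractions of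
the powers `α^n`, `n ≥ 1`, are bounded. -/
theorem period_bounded_of_unit (α : ℝ) (hpos : 0 < α)
    (hquad : (minpoly ℚ α).natDegree = 2)
    (hunit : IsIntegral ℤ α ∧ IsIntegral ℤ α⁻¹) :
    ∃ B : ℕ, ∀ n : ℕ, 0 < n → cfPeriodLength (α ^ n) ≤ B := by
  obtain ⟨hint, hint'⟩ := hunit
  have hαQ : IsIntegral ℚ α := hint.tower_top
  have hα1 : α ≠ 1 := by
    intro h
    rw [h, minpoly.one, show (1:Polynomial ℚ) = Polynomial.C 1 from (map_one _).symm,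
      Polynomial.natDegree_X_sub_C] at hquad
    exact absurd hquad (by norm_num)
  haveI : FiniteDimensional ℚ ℚ⟮α⟯ := IntermediateField.adjoin.finiteDimensional hαQ
  have hfr : Module.finrank ℚ ℚ⟮α⟯ = 2 := by
    rw [IntermediateField.adjoin.finrank hαQ, hquad]
  have hdegK : ∀ x : ℝ, x ∈ ℚ⟮α⟯ → (minpoly ℚ x).natDegree ≤ 2 := by
    intro x hx
    have h := minpoly.natDegree_le (A := ℚ) (⟨x, hx⟩ : ℚ⟮α⟯)
    rw [hfr] at h
    have e := minpoly.algebraMap_eq (A := ℚ) (B := ℚ⟮α⟯) (B' := ℝ) (algebraMap ℚ⟮α⟯ ℝ).injective (⟨x, hx⟩ : ℚ⟮α⟯)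
    have e2 : minpoly ℚ x = minpoly ℚ (⟨x, hx⟩ : ℚ⟮α⟯) := by rw [← e]; norm_cast
    rw [e2]
    exact h
  refine ⟨2, fun n hn => ?_⟩
  set γ := α ^ n with hγdef
  have hγpos : 0 < γ := pow_pos hpos n
  have hγne : γ ≠ 0 := ne_of_gt hγpos
  have hγint : IsIntegral ℤ γ := hint.pow n
  have hγinv : IsIntegral ℤ γ⁻¹ := by
    rw [hγdef, ← inv_pow]
    exact hint'.pow n
  have hγ1 : γ ≠ 1 := by
    intro h
    apply hα1
    rcases lt_trichotomy α 1 with hlt | heq | hgt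
    · exfalso
      have : γ < 1 := pow_lt_one₀ hpos.le hlt (by omega)
      rw [h] at this
      exact lt_irrefl _ this
    · exact heq
    · exfalso
      have : 1 < γ := one_lt_pow₀ hgt (by omega)
      rw [h] at this
      exact lt_irrefl _ this
  have hγinv1 : γ⁻¹ ≠ 1 := by
    rw [ne_eq, inv_eq_one]
    exact hγ1
  have hirr : ∀ q : ℚ, (q : ℝ) ≠ γ := unit_irrational γ hγint hγinv hγpos hγ1
  have hirr' : ∀ q : ℚ, (q : ℝ) ≠ γ⁻¹ :=
    unit_irrational γ⁻¹ hγinv (by rw [inv_inv]; exact hγint) (inv_pos.mpr hγpos) hγinv1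
  have hγK : γ ∈ ℚ⟮α⟯ := pow_mem (IntermediateField.mem_adjoin_simple_self ℚ α) n
  have hγinvK : γ⁻¹ ∈ ℚ⟮α⟯ := inv_mem hγK
  have hd : (minpoly ℚ γ).natDegree ≤ 2 := hdegK γ hγK
  have hd' : (minpoly ℚ γ⁻¹).natDegree ≤ 2 := hdegK γ⁻¹ hγinvK
  have hmem : IsEventuallyPeriodicWith (cfPartialQuotient γ) 2 := by
    rcases lt_trichotomy γ 1 with hlt | heq | hgt
    · obtain ⟨b, c, hc, hrel⟩ := key_quadratic γ⁻¹ hγinv (by rw [inv_inv]; exact hγint)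
        hirr' (by rw [inv_inv]; exact hirr) hd' (by rw [inv_inv]; exact hd)
      have hinv1 : 1 < γ⁻¹ := by
        nlinarith [mul_inv_cancel₀ hγne, inv_pos.mpr hγpos]
      exact ep_shift γ hγpos hlt (ep_of_quad γ⁻¹ hinv1 b c hc hrel)
    · exact absurd heq hγ1
    · obtain ⟨b, c, hc, hrel⟩ := key_quadratic γ hγint hγinv hirr hirr' hd hd'
      exact ep_of_quad γ hgt b c hc hrel
  exact Nat.sInf_le hmem
end

section
/- Let α > 1 be a real quadratic irrational which is a unit of norm 1 in the ring of integers of Q(α) with conjugate α′ = α^(−1) ∈ (0,1). Then, writing t_n = Tr_{Q(α)/Q}(α^n), for all sufficiently large n the continued fraction expansion of α^n is α^n = [t_n − 1; 1, t_n − 2, 1, t_n − 2, …], i.e. eventually periodic with period (1, t_n − 2) of length 2. -/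
/-- Let `α > 1` be a real quadratic irrational which is a unit of norm `1` in the ring of
integers of `ℚ(α)`, with conjugate `α′ = α⁻¹ ∈ (0,1)`. Then, with
`t_n = Tr_{ℚ(α)/ℚ}(α^n) = α^n + α^(−n)`, for all sufficiently large `n` the continued
fraction of `α^n` is `[t_n − 1; 1, t_n − 2, 1, t_n − 2, …]`, eventually periodic with
period `(1, t_n − 2)` of length two. -/
theorem cf_of_power_of_norm_one_unit (α : ℝ) (hα : 1 < α)
    (hquad : (minpoly ℚ α).natDegree = 2) (hint : IsIntegral ℤ α)
    (hconj : Polynomial.aeval α⁻¹ (minpoly ℚ α) = 0) :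
    ∃ N : ℕ, ∀ n : ℕ, N ≤ n →
      ∃ t : ℤ, (t : ℝ) = α ^ n + α⁻¹ ^ n ∧
        cfPartialQuotient (α ^ n) 0 = t - 1 ∧
        ∀ i : ℕ, 1 ≤ i → cfPartialQuotient (α ^ n) i = if Odd i then 1 else t - 2 := by
  have hα0 : (0:ℝ) < α := lt_trans one_pos hα
  have hαne : α ≠ 0 := ne_of_gt hα0
  -- Step 1: the trace `α + α⁻¹` is an integer
  obtain ⟨m, hm⟩ : ∃ m : ℤ, (m : ℝ) = α + α⁻¹ := by
    have hmap : minpoly ℚ α = (minpoly ℤ α).map (algebraMap ℤ ℚ) :=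
      minpoly.isIntegrallyClosed_eq_field_fractions' ℚ hint
    set p := minpoly ℚ α with hp
    have hintQ : IsIntegral ℚ α := hint.tower_top
    have hmonic : p.Monic := minpoly.monic hintQ
    have hc2 : p.coeff 2 = 1 := by
      have := hmonic.leadingCoeff
      rwa [Polynomial.leadingCoeff, hquad] at this
    have haev : Polynomial.aeval α p = 0 := minpoly.aeval ℚ α
    have hsum : ∀ x : ℝ, Polynomial.aeval x p =
        (p.coeff 0 : ℝ) + (p.coeff 1 : ℝ) * x + x ^ 2 := by
      intro x
      rw [Polynomial.aeval_eq_sum_range' (n := 3) (by rw [hquad]; norm_num) x]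
      simp [Finset.sum_range_succ, hc2, Rat.smul_def]
    have key : (p.coeff 0 : ℝ) + (p.coeff 1 : ℝ) * α + α ^ 2 = 0 := by
      rw [← hsum]; exact haev
    have key' : (p.coeff 0 : ℝ) + (p.coeff 1 : ℝ) * α⁻¹ + α⁻¹ ^ 2 = 0 := by
      rw [← hsum]; exact hconj
    have key2 : (p.coeff 0 : ℝ) * α ^ 2 + (p.coeff 1 : ℝ) * α + 1 = 0 := by
      have h := congrArg (· * α ^ 2) key'
      simp only [zero_mul] at h
      calc (p.coeff 0 : ℝ) * α ^ 2 + (p.coeff 1 : ℝ) * α + 1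
          = ((p.coeff 0 : ℝ) + (p.coeff 1 : ℝ) * α⁻¹ + α⁻¹ ^ 2) * α ^ 2 := by
            field_simp
        _ = 0 := h
    have hc0 : (p.coeff 0 : ℝ) = 1 := by
      have h3 : ((1:ℝ) - p.coeff 0) * (α ^ 2 - 1) = 0 := by linarith
      have h4 : α ^ 2 - 1 ≠ 0 := by nlinarith
      rcases mul_eq_zero.mp h3 with h | h
      · linarith
      · exact absurd h h4
    have htr : α + α⁻¹ = -(p.coeff 1 : ℝ) := by
      have h4 : α ^ 2 + (p.coeff 1 : ℝ) * α + 1 = 0 := by rw [hc0] at key; linarith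
      field_simp
      nlinarith [h4]
    refine ⟨-(minpoly ℤ α).coeff 1, ?_⟩
    have hco : p.coeff 1 = ((minpoly ℤ α).coeff 1 : ℚ) := by
      rw [hmap, Polynomial.coeff_map]; simp
    rw [htr, hco]
    push_cast
    ring
  -- Step 2: traces of all powers are integers
  have htn : ∀ n : ℕ, ∃ t : ℤ, (t : ℝ) = α ^ n + α⁻¹ ^ n := by
    have hpair : ∀ n : ℕ, (∃ t : ℤ, (t : ℝ) = α ^ n + α⁻¹ ^ n) ∧
        (∃ t : ℤ, (t : ℝ) = α ^ (n+1) + α⁻¹ ^ (n+1)) := by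
      intro n
      induction n with
      | zero => exact ⟨⟨2, by norm_num⟩, ⟨m, by simpa using hm⟩⟩
      | succ k ih =>
        obtain ⟨⟨a, ha⟩, ⟨b, hb⟩⟩ := ih
        refine ⟨⟨b, hb⟩, ⟨m * b - a, ?_⟩⟩
        push_cast
        rw [hm, hb, ha]
        simp only [inv_pow]
        field_simp
        ring
    exact fun n => (hpair n).1
  -- Step 3: choose N
  obtain ⟨N0, hN0⟩ := pow_unbounded_of_one_lt (2:ℝ) hα
  refine ⟨N0 + 1, ?_⟩
  intro n hn
  have h2 : 2 < α ^ n := lt_of_lt_of_le hN0 (pow_le_pow_right₀ hα.le (by omega))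
  obtain ⟨t, ht⟩ := htn n
  set β := α⁻¹ ^ n with hβ
  have hβeq : β = (α ^ n)⁻¹ := by rw [hβ, inv_pow]
  have hβ0 : 0 < β := by rw [hβ]; positivity
  have hβne : β ≠ 0 := ne_of_gt hβ0
  have hβhalf : β < 1/2 := by
    rw [hβeq]
    have := inv_strictAnti₀ (by norm_num : (0:ℝ) < 2) h2
    simpa using this
  have hβ1 : β < 1 := by linarith
  have hx : α ^ n = (t:ℝ) - β := by rw [ht]; ring
  have h1βne : (1:ℝ) - β ≠ 0 := by intro h; linarith [h.symm.le]
  have hβinv : β⁻¹ = (t:ℝ) - β := by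
    have hαn : β⁻¹ = α ^ n := by rw [hβeq, inv_inv]
    exact hαn.trans hx
  have hmul : ((t:ℝ) - β) * β = 1 := by
    rw [← hβinv]; exact inv_mul_cancel₀ hβne
  -- floors
  have floor0 : ⌊α ^ n⌋ = t - 1 := by
    rw [Int.floor_eq_iff, hx]
    push_cast
    constructor <;> linarith
  have hfloor1 : ⌊(1 - β)⁻¹⌋ = 1 := by
    rw [Int.floor_eq_iff]
    constructor
    · rw [le_inv_comm₀] <;> norm_num <;> linarith
    · push_cast
      have h12 : (1:ℝ)/2 < 1 - β := by linarith
      have := inv_strictAnti₀ (by norm_num : (0:ℝ) < 1/2) h12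
      norm_num at this
      linarith
  have hfloor2 : ⌊(t:ℝ) - 1 - β⌋ = t - 2 := by
    rw [Int.floor_eq_iff]
    push_cast
    constructor <;> linarith
  -- the two Gauss-map steps
  have stepA : ((1 - β)⁻¹ - ((⌊(1-β)⁻¹⌋ : ℤ) : ℝ))⁻¹ = (t:ℝ) - 1 - β := by
    rw [hfloor1]
    push_cast
    have hfrac : (1 - β)⁻¹ - 1 = β / (1 - β) := by field_simp; ring
    rw [hfrac, inv_div]
    rw [div_eq_iff hβne]
    linear_combination -hmul
  have stepB : (((t:ℝ) - 1 - β) - ((⌊(t:ℝ) - 1 - β⌋ : ℤ) : ℝ))⁻¹ = (1 - β)⁻¹ := by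
    rw [hfloor2]
    push_cast
    congr 1
    ring
  -- periodic orbit of the Gauss map
  have hg : ∀ k : ℕ, gaussIter (α ^ n) (2*k+1) = (1 - β)⁻¹ ∧
      gaussIter (α ^ n) (2*k+2) = (t:ℝ) - 1 - β := by
    intro k
    induction k with
    | zero =>
      have g1 : gaussIter (α ^ n) 1 = (1 - β)⁻¹ := by
        show (gaussIter (α ^ n) 0 - ⌊gaussIter (α ^ n) 0⌋)⁻¹ = _
        have h0 : gaussIter (α ^ n) 0 = α ^ n := rfl
        rw [h0, floor0, hx]
        push_cast
        congr 1
        ring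
      refine ⟨g1, ?_⟩
      show (gaussIter (α ^ n) 1 - ⌊gaussIter (α ^ n) 1⌋)⁻¹ = _
      rw [g1]
      exact stepA
    | succ k ih =>
      obtain ⟨ih1, ih2⟩ := ih
      have e1 : gaussIter (α ^ n) (2*(k+1)+1) = (1 - β)⁻¹ := by
        have hidx : 2*(k+1)+1 = (2*k+2)+1 := by ring
        rw [hidx]
        show (gaussIter (α ^ n) (2*k+2) - ⌊gaussIter (α ^ n) (2*k+2)⌋)⁻¹ = _
        rw [ih2]
        exact stepB
      refine ⟨e1, ?_⟩
      have hidx : 2*(k+1)+2 = (2*(k+1)+1)+1 := by ring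
      rw [hidx]
      show (gaussIter (α ^ n) (2*(k+1)+1) - ⌊gaussIter (α ^ n) (2*(k+1)+1)⌋)⁻¹ = _
      rw [e1]
      exact stepA
  refine ⟨t, ht, ?_, ?_⟩
  · show ⌊gaussIter (α ^ n) 0⌋ = t - 1
    exact floor0
  · intro i hi
    rcases Nat.even_or_odd i with he | ho
    · rw [if_neg (Nat.not_odd_iff_even.mpr he)]
      obtain ⟨j, hj⟩ := he
      have hj1 : 1 ≤ j := by omega
      have hidx : i = 2*(j-1)+2 := by omega
      show ⌊gaussIter (α ^ n) i⌋ = t - 2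
      rw [hidx, (hg (j-1)).2]
      exact hfloor2
    · rw [if_pos ho]
      obtain ⟨j, hj⟩ := ho
      show ⌊gaussIter (α ^ n) i⌋ = 1
      rw [hj, (hg j).1]
      exact hfloor1
end

section
/- Let α be a real quadratic irrational with conjugate α′. Then the continued fraction expansions of the four quadratic irrationals |α|, |α′|, |1/α|, |1/α′| are all eventually periodic with periods of the same length. -/
/-- One step of the Gauss map. -/
noncomputable def gstep (x : ℝ) : ℝ := (x - ⌊x⌋)⁻¹

lemma gaussIter_zero (x : ℝ) : gaussIter x 0 = x := rfl

lemma gaussIter_succ (x : ℝ) (k : ℕ) : gaussIter x (k + 1) = gstep (gaussIter x k) := rfl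

lemma gaussIter_add (x : ℝ) (m k : ℕ) :
    gaussIter x (m + k) = gaussIter (gaussIter x m) k := by
  induction k with
  | zero => rfl
  | succ k ih => rw [← Nat.add_assoc, gaussIter_succ, ih, gaussIter_succ]

lemma Irrational.gstep {x : ℝ} (hx : Irrational x) : Irrational (gstep x) := by
  have h1 : Irrational (x - ⌊x⌋) := hx.sub_intCast _
  have h2 : x - ⌊x⌋ ≠ 0 := by
    intro h; exact h1.ne_int 0 (by push_cast; exact h)
  simpa [_root_.gstep] using ((h1.inv))

lemma irrational_gaussIter {x : ℝ} (hx : Irrational x) (k : ℕ) :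
    Irrational (gaussIter x k) := by
  induction k with
  | zero => exact hx
  | succ k ih => exact ih.gstep

lemma one_lt_gstep {x : ℝ} (hx : Irrational x) : 1 < gstep x := by
  have h0 : 0 < x - ⌊x⌋ :=
    sub_pos.2 (lt_of_le_of_ne (Int.floor_le x) (Ne.symm (hx.ne_int _)))
  have h1 : x - ⌊x⌋ < 1 := by
    have := Int.lt_floor_add_one x
    linarith
  rw [gstep]
  exact (one_lt_inv_iff₀).2 ⟨h0, h1⟩

lemma one_lt_gaussIter {x : ℝ} (hx : Irrational x) {k : ℕ} (hk : 1 ≤ k) :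
    1 < gaussIter x k := by
  obtain ⟨j, rfl⟩ := Nat.exists_eq_add_of_le hk
  rw [Nat.add_comm, gaussIter_succ]
  exact one_lt_gstep (irrational_gaussIter hx j)

lemma one_le_floor_gaussIter {x : ℝ} (hx : Irrational x) {k : ℕ} (hk : 1 ≤ k) :
    1 ≤ ⌊gaussIter x k⌋ := by
  have := one_lt_gaussIter hx hk
  exact_mod_cast Int.le_floor.2 (by exact_mod_cast this.le)

/-- Two reals whose Gauss orbits eventually meet. -/
def GMerge (x y : ℝ) : Prop := ∃ m n, gaussIter x m = gaussIter y n

lemma GMerge.refl (x : ℝ) : GMerge x x := ⟨0, 0, rfl⟩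

lemma GMerge.symm {x y : ℝ} (h : GMerge x y) : GMerge y x := by
  obtain ⟨m, n, h⟩ := h; exact ⟨n, m, h.symm⟩

lemma GMerge.trans {x y z : ℝ} (h1 : GMerge x y) (h2 : GMerge y z) : GMerge x z := by
  obtain ⟨m, n, h1⟩ := h1
  obtain ⟨n', m', h2⟩ := h2
  rcases le_total n n' with h | h
  · obtain ⟨d, rfl⟩ := Nat.exists_eq_add_of_le h
    refine ⟨m + d, m', ?_⟩
    rw [gaussIter_add, h1, ← gaussIter_add, h2]
  · obtain ⟨d, rfl⟩ := Nat.exists_eq_add_of_le h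
    refine ⟨m, m' + d, ?_⟩
    rw [h1, gaussIter_add, h2, ← gaussIter_add]

lemma gstep_add_int (x : ℝ) (m : ℤ) : gstep (x + m) = gstep x := by
  rw [gstep, gstep, Int.floor_add_intCast]; push_cast; ring_nf

lemma gmerge_add_int (x : ℝ) (m : ℤ) : GMerge (x + m) x :=
  ⟨1, 1, by rw [gaussIter_succ, gaussIter_succ, gaussIter_zero, gaussIter_zero, gstep_add_int]⟩

lemma gstep_eq_inv {x : ℝ} (h0 : 0 < x) (h1 : x < 1) : gstep x = x⁻¹ := by
  rw [gstep, Int.floor_eq_zero_iff.2 ⟨h0.le, h1⟩]; norm_num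

/-- The Gauss orbits of `x` and `-x` eventually meet, for irrational `x`. -/
lemma gmerge_neg {x : ℝ} (hx : Irrational x) : GMerge (-x) x := by
  -- x = ⌊x⌋ + f, f ∈ (0,1); gstep x = 1/f =: x₁ > 1
  set f : ℝ := x - ⌊x⌋ with hf
  have hf0 : 0 < f := sub_pos.2 (lt_of_le_of_ne (Int.floor_le x) (Ne.symm (hx.ne_int _)))
  have hf1 : f < 1 := by have := Int.lt_floor_add_one x; rw [hf]; linarith
  have hx1 : gaussIter x 1 = f⁻¹ := by rw [gaussIter_succ, gaussIter_zero, gstep]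
  set x₁ : ℝ := f⁻¹ with hx₁def
  have hx₁gt : 1 < x₁ := (one_lt_inv_iff₀).2 ⟨hf0, hf1⟩
  have hx₁irr : Irrational x₁ := by rw [← hx1]; exact irrational_gaussIter hx 1
  -- gstep (-x) = (1 - f)⁻¹
  have hfloorneg : ⌊-x⌋ = -⌊x⌋ - 1 := by
    rw [Int.floor_eq_iff]
    constructor
    · push_cast; rw [hf] at hf1; linarith
    · push_cast; rw [hf] at hf0; linarith
  have hstepneg : gaussIter (-x) 1 = (1 - f)⁻¹ := by
    rw [gaussIter_succ, gaussIter_zero, gstep, hfloorneg]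
    push_cast; ring_nf
    rw [hf]; ring
  have h1f0 : 0 < 1 - f := by linarith
  have key : (1 - f)⁻¹ = 1 + (x₁ - 1)⁻¹ := by
    have hfx : f = x₁⁻¹ := by rw [hx₁def, inv_inv]
    have h1 : x₁ ≠ 0 := by intro h; rw [h] at hx₁gt; linarith
    have h2 : x₁ - 1 ≠ 0 := by intro h; have : x₁ = 1 := by linarith
                               rw [this] at hx₁gt; linarith
    rw [hfx]
    field_simp
    ring
  have hx₁ne2 : x₁ ≠ 2 := fun h => hx₁irr.ne_int 2 (by push_cast [h]; norm_num)
  rcases lt_or_gt_of_ne hx₁ne2 with hlt | hgt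
  · -- 1 < x₁ < 2 : gstep(-x) = 1 + x₂ where x₂ = gaussIter x 2
    have hx2 : gaussIter x 2 = (x₁ - 1)⁻¹ := by
      have hfl : ⌊x₁⌋ = 1 := by
        rw [Int.floor_eq_iff] <;> push_cast <;> constructor <;> linarith
      rw [show (2:ℕ) = 1 + 1 from rfl, gaussIter_succ, hx1, gstep, hfl]
      norm_num
    refine GMerge.trans (x := -x) (y := gaussIter x 2 + (1:ℤ)) ?_ ?_
    · refine ⟨1, 0, ?_⟩
      rw [hstepneg, key, gaussIter_zero, hx2]
      push_cast; ring
    · exact (gmerge_add_int _ _).trans ⟨0, 2, rfl⟩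
  · -- x₁ > 2 : gstep(gstep(-x)) = x₁ - 1
    have hy1 : gaussIter (-x) 1 = 1 + (x₁ - 1)⁻¹ := by rw [hstepneg, key]
    have hinv01 : 0 < (x₁ - 1)⁻¹ ∧ (x₁ - 1)⁻¹ < 1 := by
      constructor
      · exact inv_pos.2 (by linarith)
      · rw [inv_lt_one_iff₀]; right; linarith
    have hy2 : gaussIter (-x) 2 = x₁ - 1 := by
      rw [show (2:ℕ) = 1 + 1 from rfl, gaussIter_succ, hy1]
      rw [show (1:ℝ) + (x₁-1)⁻¹ = (x₁-1)⁻¹ + (1:ℤ) by push_cast; ring, gstep_add_int]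
      rw [gstep_eq_inv hinv01.1 hinv01.2, inv_inv]
    refine GMerge.trans (x := -x) (y := x₁ + (-1:ℤ)) ?_ ?_
    · exact ⟨2, 0, by rw [hy2, gaussIter_zero]; push_cast; ring⟩
    · exact (gmerge_add_int _ _).trans ⟨0, 1, hx1.symm ▸ rfl⟩

/-- The Gauss orbits of `x` and `x⁻¹` eventually meet, for irrational `x`. -/
lemma gmerge_inv {x : ℝ} (hx : Irrational x) : GMerge x⁻¹ x := by
  have main : ∀ y : ℝ, Irrational y → 0 < y → GMerge y⁻¹ y := by
    intro y hy hy0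
    have hy1 : y ≠ 1 := fun h => hy.ne_int 1 (by push_cast [h]; norm_num)
    rcases lt_or_gt_of_ne hy1 with h | h
    · exact ⟨0, 1, by rw [gaussIter_zero, gaussIter_succ, gaussIter_zero, gstep_eq_inv hy0 h]⟩
    · have : gaussIter y⁻¹ 1 = y := by
        rw [gaussIter_succ, gaussIter_zero, gstep_eq_inv (by positivity)
          ((inv_lt_one_iff₀).2 (Or.inr h)), inv_inv]
      exact ⟨1, 0, this⟩
  rcases lt_or_gt_of_ne (fun h => hx.ne_int 0 (by push_cast [← h]; norm_num) : x ≠ 0) with h | h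
  · -- x < 0
    have hnx : Irrational (-x) := hx.neg
    have h1 : GMerge (-x)⁻¹ (-x) := main _ hnx (by linarith)
    have h2 : GMerge x⁻¹ (-x)⁻¹ := by
      have := gmerge_neg (x := (-x)⁻¹) (hnx.inv)
      simpa [inv_neg] using this
    exact (h2.trans h1).trans (gmerge_neg hx)
  · exact main x hx h

/-- If two sequences have a common tail (up to shift), they have the same eventual periods. -/
lemma evper_set_eq_of_tail {f g : ℕ → ℤ} (m n : ℕ) (h : ∀ k, f (m + k) = g (n + k)) :
    {p | IsEventuallyPeriodicWith f p} = {p | IsEventuallyPeriodicWith g p} := by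
  have main : ∀ (f g : ℕ → ℤ) (m n : ℕ), (∀ k, f (m + k) = g (n + k)) →
      ∀ p, IsEventuallyPeriodicWith f p → IsEventuallyPeriodicWith g p := by
    intro f g m n h p ⟨hp, N, hN⟩
    refine ⟨hp, n + N + m, fun k hk => ?_⟩
    calc g (k + p) = g (n + (k - n + p)) := by congr 1; omega
      _ = f (m + (k - n + p)) := (h _).symm
      _ = f (m + (k - n) + p) := by congr 1; omega
      _ = f (m + (k - n)) := hN _ (by omega)
      _ = g (n + (k - n)) := h _
      _ = g k := by congr 1; omega
  ext p
  exact ⟨main f g m n h p, main g f n m (fun k => (h k).symm) p⟩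

lemma evper_set_eq_of_gmerge {x y : ℝ} (h : GMerge x y) :
    {p | IsEventuallyPeriodicWith (cfPartialQuotient x) p}
      = {p | IsEventuallyPeriodicWith (cfPartialQuotient y) p} := by
  obtain ⟨m, n, h⟩ := h
  refine evper_set_eq_of_tail m n (fun k => ?_)
  unfold cfPartialQuotient
  rw [gaussIter_add, gaussIter_add, h]

lemma cfPeriodLength_eq_of_gmerge {x y : ℝ} (h : GMerge x y) :
    cfPeriodLength x = cfPeriodLength y := by
  unfold cfPeriodLength periodLength
  rw [evper_set_eq_of_gmerge h]

lemma exists_evper_of_gmerge {x y : ℝ} (h : GMerge x y)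
    (hy : ∃ p, IsEventuallyPeriodicWith (cfPartialQuotient y) p) :
    ∃ p, IsEventuallyPeriodicWith (cfPartialQuotient x) p := by
  obtain ⟨p, hp⟩ := hy
  exact ⟨p, by have := evper_set_eq_of_gmerge h; rw [Set.ext_iff] at this; exact (this p).2 hp⟩

section Combinatorics

variable {u : ℕ → ℤ} {r : ℕ}

lemma periodic_mod (hu : ∀ k, u (k + r) = u k) (k : ℕ) (t : ℕ) : u (k + t * r) = u k := by
  induction t with
  | zero => simp
  | succ t ih => rw [show k + (t+1) * r = (k + t * r) + r by ring, hu, ih]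

/-- For a purely periodic sequence, an eventual period is a full period. -/
lemma evper_pure (hr : 0 < r) (hu : ∀ k, u (k + r) = u k) {p : ℕ}
    (h : IsEventuallyPeriodicWith u p) : ∀ k, u (k + p) = u k := by
  obtain ⟨hp, N, hN⟩ := h
  intro k
  have := hN (k + N * r) (by nlinarith [Nat.le_mul_of_pos_right N hr])
  calc u (k + p) = u (k + p + N * r) := (periodic_mod hu _ N).symm
    _ = u (k + N * r) := by rw [show k + p + N*r = (k + N*r) + p by ring]; exact this
    _ = u k := periodic_mod hu _ N

/-- The set of full periods is closed under gcd. -/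
lemma shift_gcd {p : ℕ} (hp : ∀ k, u (k + p) = u k) (hr : ∀ k, u (k + r) = u k) :
    ∀ k, u (k + Nat.gcd p r) = u k := by
  have hsub : ∀ a b : ℕ, b ≤ a → (∀ k, u (k + a) = u k) → (∀ k, u (k + b) = u k) →
      ∀ k, u (k + (a - b)) = u k := by
    intro a b hba ha hb k
    have := hb (k + (a - b))
    rw [show k + (a-b) + b = k + a by omega, ha] at this
    exact this.symm
  have hmod : ∀ a b : ℕ, 0 < b → (∀ k, u (k + b) = u k) → (∀ k, u (k + a) = u k) →
      ∀ k, u (k + a % b) = u k := by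
    intro a
    induction a using Nat.strong_induction_on with
    | _ a ih =>
      intro b hb0 hb ha
      by_cases hab : a < b
      · rwa [Nat.mod_eq_of_lt hab]
      · push_neg at hab
        have h1 : ∀ k, u (k + (a - b)) = u k := hsub a b hab ha hb
        have h2 := ih (a - b) (by omega) b hb0 hb h1
        rwa [Nat.mod_eq_sub_mod hab]
  induction p, r using Nat.gcd.induction with
  | H0 n => simpa using hr
  | H1 m n hm ih =>
    rw [Nat.gcd_rec]
    exact ih (hmod n m hm hp hr) hp

lemma eq_of_mod_gcd {g : ℕ} (hg : ∀ k, u (k + g) = u k) {a b : ℕ} (hab : a % g = b % g) :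
    u a = u b := by
  rcases le_total a b with h | h
  · obtain ⟨t, ht⟩ := (Nat.modEq_iff_dvd' h).mp hab
    have hb : b = a + t * g := by rw [Nat.mul_comm]; omega
    rw [hb, periodic_mod hg]
  · obtain ⟨t, ht⟩ := (Nat.modEq_iff_dvd' h).mp hab.symm
    have ha : a = b + t * g := by rw [Nat.mul_comm]; omega
    rw [ha, periodic_mod hg]

/-- Reversal lemma: a purely periodic sequence and its cyclic reversal have the same
eventual periods. -/
lemma evper_reverse {v : ℕ → ℤ} (hr : 0 < r)
    (hu : ∀ k, u (k + r) = u k) (hv : ∀ k, v (k + r) = v k)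
    (hrev : ∀ j, j < r → v j = u (r - 1 - j)) :
    ∀ p, IsEventuallyPeriodicWith u p → IsEventuallyPeriodicWith v p := by
  intro p hper
  have hp0 := hper.1
  have hp : ∀ k, u (k + p) = u k := evper_pure hr hu hper
  have hg : ∀ k, u (k + Nat.gcd p r) = u k := shift_gcd hp hu
  set g := Nat.gcd p r with hgdef
  have hg0 : 0 < g := Nat.gcd_pos_of_pos_left _ hp0
  have hgr : g ∣ r := Nat.gcd_dvd_right _ _
  have hgp : g ∣ p := Nat.gcd_dvd_left _ _
  refine ⟨hp0, 0, fun k _ => ?_⟩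
  have hvmod : ∀ m : ℕ, v m = u (r - 1 - m % r) := by
    intro m
    have h1 : v m = v (m % r) := by
      conv_lhs => rw [show m = m % r + (m / r) * r by rw [Nat.mod_add_div']]
      rw [periodic_mod hv]
    rw [h1, hrev _ (Nat.mod_lt _ hr)]
  rw [hvmod (k + p), hvmod k]
  set a1 := (k + p) % r with ha1
  set a2 := k % r with ha2
  have ha1r : a1 < r := Nat.mod_lt _ hr
  have ha2r : a2 < r := Nat.mod_lt _ hr
  refine eq_of_mod_gcd hg ?_
  have hm : a1 % g = a2 % g := by
    have h1 : a1 % g = (a2 + p % r) % g := by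
      rw [ha1, ha2, Nat.add_mod k p r, Nat.mod_mod_of_dvd _ hgr,
        Nat.add_mod (k % r), Nat.mod_mod_of_dvd _ hgr, ← Nat.add_mod]
    have h2 : p % r % g = 0 := Nat.dvd_iff_mod_eq_zero.1 ((Nat.dvd_mod_iff hgr).2 hgp)
    rw [h1, Nat.add_mod, h2, Nat.add_zero, Nat.mod_mod]
  have he : (r - 1 - a1) + a1 = (r - 1 - a2) + a2 := by omega
  have hc : (r - 1 - a1) + a1 ≡ (r - 1 - a2) + a2 [MOD g] := by rw [he]
  exact (Nat.ModEq.add_right_cancel hm hc : _ ≡ _ [MOD g])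

end Combinatorics

section Quadratic

/-- The conjugate orbit driven by the partial quotients of `x`. -/
noncomputable def conjOrbit (x y : ℝ) : ℕ → ℝ
  | 0 => y
  | k + 1 => (conjOrbit x y k - ⌊gaussIter x k⌋)⁻¹

/-- Integer quadratic coefficients along the Gauss orbit. -/
noncomputable def tripleSeq (x : ℝ) (abc : ℤ × ℤ × ℤ) : ℕ → ℤ × ℤ × ℤ
  | 0 => abc
  | k + 1 =>
    ((tripleSeq x abc k).1 * ⌊gaussIter x k⌋ ^ 2 + (tripleSeq x abc k).2.1 * ⌊gaussIter x k⌋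
        + (tripleSeq x abc k).2.2,
      2 * (tripleSeq x abc k).1 * ⌊gaussIter x k⌋ + (tripleSeq x abc k).2.1,
      (tripleSeq x abc k).1)

lemma conjOrbit_succ (x y : ℝ) (k : ℕ) :
    conjOrbit x y (k + 1) = (conjOrbit x y k - ⌊gaussIter x k⌋)⁻¹ := rfl

/-- Transforming an integer quadratic relation under `s = m + t⁻¹`. -/
lemma quadStep {A B C m : ℤ} {s t : ℝ} (ht : t ≠ 0) (hs : s = m + t⁻¹)
    (hq : (A : ℝ) * s^2 + B * s + C = 0) :
    ((A * m^2 + B * m + C : ℤ) : ℝ) * t^2 + ((2 * A * m + B : ℤ) : ℝ) * t + A = 0 := by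
  have hst : s * t = m * t + 1 := by rw [hs]; field_simp
  push_cast
  linear_combination t^2 * hq - ((A:ℝ) * ((m:ℝ)*t + 1 + s*t) + (B:ℝ)*t) * hst

lemma quad_inv {x y : ℝ} {A B C : ℤ} (hx : Irrational x) (hy : Irrational y)
    (hxy : x ≠ y) (hA : A ≠ 0)
    (hqx : (A:ℝ) * x^2 + B * x + C = 0) (hqy : (A:ℝ) * y^2 + B * y + C = 0) :
    ∀ k, (tripleSeq x (A,B,C) k).1 ≠ 0
      ∧ (((tripleSeq x (A,B,C) k).1 : ℝ) * (gaussIter x k)^2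
          + ((tripleSeq x (A,B,C) k).2.1 : ℝ) * gaussIter x k
          + ((tripleSeq x (A,B,C) k).2.2 : ℝ) = 0)
      ∧ (((tripleSeq x (A,B,C) k).1 : ℝ) * (conjOrbit x y k)^2
          + ((tripleSeq x (A,B,C) k).2.1 : ℝ) * conjOrbit x y k
          + ((tripleSeq x (A,B,C) k).2.2 : ℝ) = 0)
      ∧ gaussIter x k ≠ conjOrbit x y k ∧ Irrational (conjOrbit x y k) := by
  intro k
  induction k with
  | zero => exact ⟨hA, hqx, hqy, hxy, hy⟩
  | succ k ih =>
    obtain ⟨h1, h2, h3, h4, h5⟩ := ih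
    set m : ℤ := ⌊gaussIter x k⌋ with hm
    have hXirr : Irrational (gaussIter x k) := irrational_gaussIter hx k
    have hXirr1 : Irrational (gaussIter x (k+1)) := irrational_gaussIter hx (k+1)
    have hXm : gaussIter x k - (m:ℝ) ≠ 0 := sub_ne_zero.2 (hXirr.ne_int m)
    have hYm : conjOrbit x y k - (m:ℝ) ≠ 0 := sub_ne_zero.2 (h5.ne_int m)
    have hXk1 : gaussIter x (k+1) = (gaussIter x k - (m:ℝ))⁻¹ := rfl
    have hYk1 : conjOrbit x y (k+1) = (conjOrbit x y k - (m:ℝ))⁻¹ := rfl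
    have hXne : gaussIter x (k+1) ≠ 0 := by rw [hXk1]; exact inv_ne_zero hXm
    have hYne : conjOrbit x y (k+1) ≠ 0 := by rw [hYk1]; exact inv_ne_zero hYm
    have hXeq : gaussIter x k = (m:ℝ) + (gaussIter x (k+1))⁻¹ := by
      rw [hXk1, inv_inv]; ring
    have hYeq : conjOrbit x y k = (m:ℝ) + (conjOrbit x y (k+1))⁻¹ := by
      rw [hYk1, inv_inv]; ring
    have hTsucc : tripleSeq x (A,B,C) (k+1)
        = ((tripleSeq x (A,B,C) k).1 * m ^ 2 + (tripleSeq x (A,B,C) k).2.1 * m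
            + (tripleSeq x (A,B,C) k).2.2,
          2 * (tripleSeq x (A,B,C) k).1 * m + (tripleSeq x (A,B,C) k).2.1,
          (tripleSeq x (A,B,C) k).1) := rfl
    have hEX := quadStep hXne hXeq h2
    have hEY := quadStep hYne hYeq h3
    rw [hTsucc]
    have hYirr1 : Irrational (conjOrbit x y (k+1)) := by
      rw [hYk1]; exact ((h5.sub_intCast m).inv)
    refine ⟨?_, by exact_mod_cast hEX, by exact_mod_cast hEY, ?_, hYirr1⟩
    · -- leading coefficient nonzero
      intro h0
      have h0' : ((tripleSeq x (A,B,C) k).1 * m ^ 2 + (tripleSeq x (A,B,C) k).2.1 * m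
          + (tripleSeq x (A,B,C) k).2.2 : ℤ) = 0 := h0
      rw [h0'] at hEX
      simp only [Int.cast_zero, zero_mul, zero_add] at hEX
      by_cases hB0 : (2 * (tripleSeq x (A,B,C) k).1 * m + (tripleSeq x (A,B,C) k).2.1 : ℤ) = 0
      · rw [hB0] at hEX
        simp at hEX
        exact h1 hEX
      · have hB0' : ((2 * (tripleSeq x (A,B,C) k).1 * m + (tripleSeq x (A,B,C) k).2.1 : ℤ) : ℝ) ≠ 0 :=
          Int.cast_ne_zero.2 hB0
        have hXval : gaussIter x (k+1)
            = ((-(((tripleSeq x (A,B,C) k).1 : ℚ))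
                / ((2 * (tripleSeq x (A,B,C) k).1 * m + (tripleSeq x (A,B,C) k).2.1 : ℤ) : ℚ) : ℚ) : ℝ) := by
          push_cast
          rw [eq_div_iff (by push_cast at hB0'; exact hB0')]
          push_cast at hEX ⊢
          linear_combination hEX
        exact hXirr1 ⟨_, hXval.symm⟩
    · -- X(k+1) ≠ Y(k+1)
      intro h
      apply h4
      rw [hXk1, hYk1] at h
      have := inv_injective h
      linarith

end Quadratic

def QuadInvariant (x y : ℝ) (A B C : ℤ) : Prop :=
  ∀ k, (tripleSeq x (A,B,C) k).1 ≠ 0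
    ∧ (((tripleSeq x (A,B,C) k).1 : ℝ) * (gaussIter x k)^2
        + ((tripleSeq x (A,B,C) k).2.1 : ℝ) * gaussIter x k
        + ((tripleSeq x (A,B,C) k).2.2 : ℝ) = 0)
    ∧ (((tripleSeq x (A,B,C) k).1 : ℝ) * (conjOrbit x y k)^2
        + ((tripleSeq x (A,B,C) k).2.1 : ℝ) * conjOrbit x y k
        + ((tripleSeq x (A,B,C) k).2.2 : ℝ) = 0)
    ∧ gaussIter x k ≠ conjOrbit x y k ∧ Irrational (conjOrbit x y k)

lemma gaussIter_eq_floor_add_inv {x : ℝ} (hx : Irrational x) (k : ℕ) :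
    gaussIter x k = (⌊gaussIter x k⌋ : ℝ) + (gaussIter x (k+1))⁻¹ := by
  have h : gaussIter x (k+1) = (gaussIter x k - (⌊gaussIter x k⌋:ℝ))⁻¹ := rfl
  rw [h, inv_inv]; ring

lemma conjOrbit_eq_floor_add_inv {x y : ℝ} (k : ℕ) (hy : Irrational (conjOrbit x y k)) :
    conjOrbit x y k = (⌊gaussIter x k⌋ : ℝ) + (conjOrbit x y (k+1))⁻¹ := by
  rw [conjOrbit_succ, inv_inv]; ring

lemma inv_mem_neg_unit {a : ℝ} (h : a < -1) : -1 < a⁻¹ ∧ a⁻¹ < 0 := by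
  constructor
  · rw [neg_lt, ← inv_neg]
    exact inv_lt_one_of_one_lt₀ (by linarith)
  · exact inv_lt_zero.2 (by linarith)

lemma conj_eventually_neg {x y : ℝ} {A B C : ℤ} (hx : Irrational x)
    (hinv : QuadInvariant x y A B C) : ∃ K, 1 ≤ K ∧ conjOrbit x y K < 0 := by
  by_contra hcon
  push_neg at hcon
  have hYirr : ∀ k, Irrational (conjOrbit x y k) := fun k => (hinv k).2.2.2.2
  have hXYne : ∀ k, gaussIter x k ≠ conjOrbit x y k := fun k => (hinv k).2.2.2.1
  have hpos : ∀ k, 1 ≤ k → 0 < conjOrbit x y k := by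
    intro k hk
    refine lt_of_le_of_ne (hcon k hk) (Ne.symm ?_)
    have := (hYirr k).ne_int 0
    simpa using this
  have hstep1 : ∀ k, 1 ≤ k → 0 < conjOrbit x y k - (⌊gaussIter x k⌋ : ℝ) := by
    intro k hk
    have h1 : 0 < conjOrbit x y (k+1) := hpos (k+1) (by omega)
    rw [conjOrbit_succ] at h1
    exact inv_pos.1 h1
  have hmfloor : ∀ k, 1 ≤ k → (1:ℝ) ≤ (⌊gaussIter x k⌋ : ℝ) := by
    intro k hk; exact_mod_cast one_le_floor_gaussIter hx hk
  have hstep2 : ∀ k, 1 ≤ k → conjOrbit x y k - (⌊gaussIter x k⌋ : ℝ) < 1 := by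
    intro k hk
    by_contra hge
    push_neg at hge
    have h1 : conjOrbit x y (k+1) ≤ 1 := by
      rw [conjOrbit_succ]
      exact inv_le_one_of_one_le₀ hge
    have h2 := hstep1 (k+1) (by omega)
    have h3 := hmfloor (k+1) (by omega)
    linarith
  -- the gap |X k - Y k| is < 1 in the positive regime
  have hgap : ∀ k, 1 ≤ k → |gaussIter x k - conjOrbit x y k| < 1 := by
    intro k hk
    have hXlo : 0 < gaussIter x k - (⌊gaussIter x k⌋:ℝ) := by
      have h1 := one_lt_gstep (irrational_gaussIter hx k)
      have : gaussIter x (k+1) = gstep (gaussIter x k) := rfl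
      have h2 := gaussIter_eq_floor_add_inv hx k
      have h3 : (0:ℝ) < (gaussIter x (k+1))⁻¹ := by
        rw [this]; exact inv_pos.2 (by linarith [one_lt_gstep (irrational_gaussIter hx k)])
      linarith
    have hXhi : gaussIter x k - (⌊gaussIter x k⌋:ℝ) < 1 := by
      have := Int.lt_floor_add_one (gaussIter x k)
      linarith
    have h1 := hstep1 k hk
    have h2 := hstep2 k hk
    rw [abs_lt]; constructor <;> linarith
  -- multiplicative recurrence for the gap
  have hdrec : ∀ k, (gaussIter x k - conjOrbit x y k)
      * (gaussIter x (k+1) * conjOrbit x y (k+1))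
      = -(gaussIter x (k+1) - conjOrbit x y (k+1)) := by
    intro k
    have hXne : gaussIter x (k+1) ≠ 0 := by
      have := (irrational_gaussIter hx (k+1)).ne_int 0; simpa using this
    have hYne : conjOrbit x y (k+1) ≠ 0 := by
      have := (hYirr (k+1)).ne_int 0; simpa using this
    have hXc : (gaussIter x (k+1))⁻¹ * gaussIter x (k+1) = 1 := inv_mul_cancel₀ hXne
    have hYc : (conjOrbit x y (k+1))⁻¹ * conjOrbit x y (k+1) = 1 := inv_mul_cancel₀ hYne
    have hXeq := gaussIter_eq_floor_add_inv hx k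
    have hYeq := conjOrbit_eq_floor_add_inv k (hYirr k)
    linear_combination (gaussIter x (k+1) * conjOrbit x y (k+1)) * (hXeq - hYeq)
      + conjOrbit x y (k+1) * hXc - gaussIter x (k+1) * hYc
  -- two-step contraction
  have htwo : ∀ k, 1 ≤ k → 2 * |gaussIter x k - conjOrbit x y k|
      ≤ |gaussIter x (k+2) - conjOrbit x y (k+2)| := by
    intro k hk
    have e1 := congrArg abs (hdrec k)
    have e2 := congrArg abs (hdrec (k+1))
    rw [abs_mul, abs_neg] at e1 e2
    have hX1 : 1 < gaussIter x (k+1) := one_lt_gaussIter hx (by omega)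
    have hX2 : 1 < gaussIter x (k+2) := one_lt_gaussIter hx (by omega)
    have hY1 : 1 ≤ conjOrbit x y (k+1) := by
      have := hstep1 (k+1) (by omega); have := hmfloor (k+1) (by omega); linarith
    have hY2 : 1 ≤ conjOrbit x y (k+2) := by
      have := hstep1 (k+2) (by omega); have := hmfloor (k+2) (by omega); linarith
    have habs1 : |gaussIter x (k+1) * conjOrbit x y (k+1)|
        = gaussIter x (k+1) * conjOrbit x y (k+1) := abs_of_pos (by nlinarith)
    have habs2 : |gaussIter x (k+2) * conjOrbit x y (k+2)|
        = gaussIter x (k+2) * conjOrbit x y (k+2) := abs_of_pos (by nlinarith)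
    rw [habs1] at e1
    rw [habs2] at e2
    -- X(k+1) * X(k+2) > 2
    have hXX : 2 < gaussIter x (k+1) * gaussIter x (k+2) := by
      have h1 := gaussIter_eq_floor_add_inv hx (k+1)
      have h2 := hmfloor (k+1) (by omega)
      have h3 : (0:ℝ) < (gaussIter x (k+2))⁻¹ := inv_pos.2 (by linarith)
      have h4 : (gaussIter x (k+2))⁻¹ * gaussIter x (k+2) = 1 :=
        inv_mul_cancel₀ (by positivity)
      nlinarith
    simp only [show k+1+1 = k+2 from rfl] at e2
    have e3 : |gaussIter x (k+2) - conjOrbit x y (k+2)|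
        = |gaussIter x k - conjOrbit x y k|
          * (gaussIter x (k+1) * conjOrbit x y (k+1) * (gaussIter x (k+2) * conjOrbit x y (k+2))) := by
      rw [← e2, ← e1]; ring
    have hXXpos : (0:ℝ) < gaussIter x (k+1) * gaussIter x (k+2) := by nlinarith
    have hYY : (1:ℝ) ≤ conjOrbit x y (k+1) * conjOrbit x y (k+2) := by nlinarith
    have hmono := mul_le_mul_of_nonneg_left hYY hXXpos.le
    have hQ : (2:ℝ) ≤ gaussIter x (k+1) * conjOrbit x y (k+1)
        * (gaussIter x (k+2) * conjOrbit x y (k+2)) := by nlinarith [hmono]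
    have hfin := mul_nonneg (abs_nonneg (gaussIter x k - conjOrbit x y k))
      (by linarith : (0:ℝ) ≤ gaussIter x (k+1) * conjOrbit x y (k+1)
        * (gaussIter x (k+2) * conjOrbit x y (k+2)) - 2)
    nlinarith [hfin, e3]
  -- iterate: 2^t * |d 1| ≤ |d (1+2t)| < 1
  have hiter : ∀ t : ℕ, 2^t * |gaussIter x 1 - conjOrbit x y 1|
      ≤ |gaussIter x (1 + 2*t) - conjOrbit x y (1 + 2*t)| := by
    intro t
    induction t with
    | zero => simp
    | succ t ih =>
      have h1 := htwo (1 + 2*t) (by omega)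
      have : (2:ℝ)^(t+1) * |gaussIter x 1 - conjOrbit x y 1|
          = 2 * (2^t * |gaussIter x 1 - conjOrbit x y 1|) := by ring
      rw [this, show 1 + 2*(t+1) = (1 + 2*t) + 2 by ring]
      calc 2 * (2^t * |gaussIter x 1 - conjOrbit x y 1|)
          ≤ 2 * |gaussIter x (1+2*t) - conjOrbit x y (1+2*t)| := by linarith
        _ ≤ _ := h1
  have hd1 : 0 < |gaussIter x 1 - conjOrbit x y 1| := abs_pos.2 (sub_ne_zero.2 (hXYne 1))
  obtain ⟨t, ht⟩ := pow_unbounded_of_one_lt (1 / |gaussIter x 1 - conjOrbit x y 1|)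
    (by norm_num : (1:ℝ) < 2)
  have h1 := hiter t
  have h2 := hgap (1 + 2*t) (by omega)
  have h3 : 1 < 2^t * |gaussIter x 1 - conjOrbit x y 1| := by
    rw [div_lt_iff₀ hd1] at ht
    linarith
  linarith

lemma quad_sum {A B C : ℤ} {X Y : ℝ} (hXY : X ≠ Y)
    (h2 : (A:ℝ)*X^2 + B*X + C = 0) (h3 : (A:ℝ)*Y^2 + B*Y + C = 0) :
    (A:ℝ)*(X+Y) + B = 0 := by
  have h : (X - Y) * ((A:ℝ)*(X+Y) + B) = 0 := by linear_combination h2 - h3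
  rcases mul_eq_zero.1 h with h | h
  · exact absurd (sub_eq_zero.1 h) hXY
  · exact h

lemma quad_disc_real {A B C : ℤ} {X Y : ℝ} (hXY : X ≠ Y)
    (h2 : (A:ℝ)*X^2 + B*X + C = 0) (h3 : (A:ℝ)*Y^2 + B*Y + C = 0) :
    ((B^2 - 4*A*C : ℤ) : ℝ) = (A:ℝ)^2 * (X - Y)^2 := by
  have hsum := quad_sum hXY h2 h3
  have hprod : (C:ℝ) = A*X*Y := by linear_combination h2 - X*hsum
  have hB : (B:ℝ) = -(A:ℝ)*(X+Y) := by linarith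
  push_cast
  rw [hB, hprod]; ring

def discOf (v : ℤ × ℤ × ℤ) : ℤ := v.2.1^2 - 4*v.1*v.2.2

lemma tripleSeq_disc (x : ℝ) (abc : ℤ×ℤ×ℤ) (k : ℕ) :
    discOf (tripleSeq x abc k) = discOf abc := by
  induction k with
  | zero => rfl
  | succ k ih => rw [← ih]; simp only [tripleSeq, discOf]; ring

lemma int_coeffs_eq_zero {p q : ℤ} {X : ℝ} (hX : Irrational X) (h : (p:ℝ)*X + q = 0) :
    p = 0 := by
  by_contra hp
  have hpz : (p:ℝ) ≠ 0 := Int.cast_ne_zero.2 hp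
  have hX' : X = ((-q/p : ℚ):ℝ) := by
    push_cast
    rw [eq_div_iff hpz]
    linear_combination h
  exact hX ⟨_, hX'.symm⟩

lemma quad_main {x y : ℝ} {A B C : ℤ} (hx : Irrational x) (hy : Irrational y)
    (hxy : x ≠ y) (hA : A ≠ 0)
    (hqx : (A:ℝ) * x^2 + B * x + C = 0) (hqy : (A:ℝ) * y^2 + B * y + C = 0) :
    ∃ r P : ℕ, 0 < r ∧ 1 ≤ P ∧
      (∀ k, Irrational (conjOrbit x y k)) ∧
      (∀ k, P ≤ k → gaussIter x (k + r) = gaussIter x k) ∧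
      (∀ k, P ≤ k → conjOrbit x y (k + r) = conjOrbit x y k) ∧
      (∀ k, P ≤ k → -1 < conjOrbit x y k ∧ conjOrbit x y k < 0) := by
  have hinv : QuadInvariant x y A B C := quad_inv hx hy hxy hA hqx hqy
  have hYirr : ∀ k, Irrational (conjOrbit x y k) := fun k => (hinv k).2.2.2.2
  obtain ⟨K, hK1, hKneg⟩ := conj_eventually_neg hx hinv
  have hYneg : ∀ k, K ≤ k → conjOrbit x y k < 0 := by
    intro k hk
    induction k, hk using Nat.le_induction with
    | base => exact hKneg
    | succ k hk ih =>
      have hm : (1:ℝ) ≤ (⌊gaussIter x k⌋:ℝ) := by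
        exact_mod_cast one_le_floor_gaussIter hx (le_trans hK1 hk)
      rw [conjOrbit_succ]
      exact (inv_mem_neg_unit (by linarith)).2
  have hred : ∀ k, K + 1 ≤ k → -1 < conjOrbit x y k ∧ conjOrbit x y k < 0 := by
    intro k hk
    obtain ⟨j, rfl⟩ : ∃ j, k = j + 1 := ⟨k - 1, by omega⟩
    have hm : (1:ℝ) ≤ (⌊gaussIter x j⌋:ℝ) := by
      exact_mod_cast one_le_floor_gaussIter hx (le_trans hK1 (by omega))
    have hneg := hYneg j (by omega)
    rw [conjOrbit_succ]
    exact inv_mem_neg_unit (by linarith)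
  -- the discriminant
  set D : ℤ := B^2 - 4*A*C with hD
  have hdisc : ∀ k, (tripleSeq x (A,B,C) k).2.1^2
      - 4*(tripleSeq x (A,B,C) k).1*(tripleSeq x (A,B,C) k).2.2 = D :=
    fun k => tripleSeq_disc x (A,B,C) k
  have hDposR : (0:ℝ) < ((D:ℤ):ℝ) := by
    rw [hD, quad_disc_real hxy hqx hqy]
    have h1 : (A:ℝ) ≠ 0 := Int.cast_ne_zero.2 hA
    have h2 : x - y ≠ 0 := sub_ne_zero.2 hxy
    positivity
  have hDpos : 0 < D := by exact_mod_cast hDposR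
  -- coefficient bounds in the reduced zone
  have habound : ∀ k, K + 1 ≤ k → ((tripleSeq x (A,B,C) k).1)^2 ≤ D := by
    intro k hk
    obtain ⟨h1, h2, h3, h4, h5⟩ := hinv k
    have hXk : 1 < gaussIter x k := one_lt_gaussIter hx (by omega)
    have hYk := hred k hk
    have hdiff : 1 < gaussIter x k - conjOrbit x y k := by linarith [hYk.2]
    have hid := quad_disc_real h4 h2 h3
    rw [hdisc k] at hid
    have h6 : (1:ℝ) ≤ (gaussIter x k - conjOrbit x y k)^2 := by nlinarith
    have h7 := mul_le_mul_of_nonneg_left h6 (sq_nonneg ((tripleSeq x (A,B,C) k).1:ℝ))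
    have hle : ((tripleSeq x (A,B,C) k).1:ℝ)^2 ≤ ((D:ℤ):ℝ) := by
      rw [hid]; linarith
    exact_mod_cast hle
  have hcbound : ∀ k, K + 2 ≤ k → ((tripleSeq x (A,B,C) k).2.2)^2 ≤ D := by
    intro k hk
    obtain ⟨j, rfl⟩ : ∃ j, k = j + 1 := ⟨k - 1, by omega⟩
    have : (tripleSeq x (A,B,C) (j+1)).2.2 = (tripleSeq x (A,B,C) j).1 := rfl
    rw [this]
    exact habound j (by omega)
  have hbbound : ∀ k, K + 2 ≤ k → ((tripleSeq x (A,B,C) k).2.1)^2 ≤ 5*D := by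
    intro k hk
    have h1 := habound k (by omega)
    have h2 := hcbound k hk
    have h3 := hdisc k
    have hac2 : ((tripleSeq x (A,B,C) k).1 * (tripleSeq x (A,B,C) k).2.2)^2 ≤ D^2 := by nlinarith
    have hac : (tripleSeq x (A,B,C) k).1 * (tripleSeq x (A,B,C) k).2.2 ≤ D := by nlinarith
    nlinarith
  -- pigeonhole on a finite set of possible iterate values
  set S : Set ℝ := {t | ∃ v : ℤ×ℤ×ℤ, v.1 ≠ 0 ∧ v.1^2 ≤ D ∧ v.2.1^2 ≤ 5*D ∧ v.2.2^2 ≤ D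
    ∧ (v.1:ℝ)*t^2 + v.2.1*t + v.2.2 = 0} with hS
  have hSfin : S.Finite := by
    have hsub : S ⊆ ⋃ v ∈ Set.Icc ((-D, -(5*D), -D) : ℤ×ℤ×ℤ) ((D, 5*D, D) : ℤ×ℤ×ℤ),
        {t : ℝ | v.1 ≠ 0 ∧ (v.1:ℝ)*t^2 + v.2.1*t + v.2.2 = 0} := by
      rintro t ⟨v, hv1, hv2, hv3, hv4, hv5⟩
      refine Set.mem_biUnion ?_ ⟨hv1, hv5⟩
      simp only [Set.mem_Icc, Prod.le_def]
      refine ⟨⟨?_, ?_, ?_⟩, ⟨?_, ?_, ?_⟩⟩ <;> nlinarith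
    refine Set.Finite.subset (Set.Finite.biUnion (Set.finite_Icc _ _) ?_) hsub
    intro v _
    by_cases hv1 : v.1 = 0
    · simp [hv1]
    · set p : Polynomial ℝ := Polynomial.C (v.1:ℝ) * Polynomial.X^2
        + Polynomial.C (v.2.1:ℝ) * Polynomial.X + Polynomial.C (v.2.2:ℝ) with hp
      have hp2 : p.coeff 2 = (v.1:ℝ) := by
        rw [hp, Polynomial.coeff_add, Polynomial.coeff_add, Polynomial.coeff_C_mul,
          Polynomial.coeff_C_mul, Polynomial.coeff_X_pow, Polynomial.coeff_C,
          Polynomial.coeff_X]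
        norm_num
      have hpne : p ≠ 0 := by
        intro h
        rw [h] at hp2
        simp at hp2
        exact hv1 (by exact_mod_cast hp2.symm)
      refine Set.Finite.subset (Polynomial.finite_setOf_isRoot hpne) ?_
      rintro t ⟨-, ht⟩
      show p.IsRoot t
      simp only [hp, Polynomial.IsRoot, Polynomial.eval_add, Polynomial.eval_mul,
        Polynomial.eval_C, Polynomial.eval_pow, Polynomial.eval_X]
      linear_combination ht
  have hmaps : Set.MapsTo (gaussIter x) (Set.Ici (K+2)) S := by
    intro k hk
    have hk' : K + 2 ≤ k := hk
    obtain ⟨h1, h2, h3, h4, h5⟩ := hinv k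
    exact ⟨tripleSeq x (A,B,C) k, h1, habound k (by omega), hbbound k hk', hcbound k hk', h2⟩
  obtain ⟨m, hm, n, hn, hmn, heq⟩ :=
    (Set.Ici_infinite (K+2)).exists_ne_map_eq_of_mapsTo hmaps hSfin
  obtain ⟨N, r, hNK, hr, hXNr⟩ : ∃ N r : ℕ, K + 2 ≤ N ∧ 0 < r
      ∧ gaussIter x (N + r) = gaussIter x N := by
    rcases lt_or_gt_of_ne hmn with h | h
    · exact ⟨m, n - m, hm, by omega, by rw [show m + (n - m) = n by omega, heq]⟩
    · exact ⟨n, m - n, hn, by omega, by rw [show n + (m - n) = m by omega, ← heq]⟩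
  have hXper : ∀ k, N ≤ k → gaussIter x (k + r) = gaussIter x k := by
    intro k hk
    induction k, hk using Nat.le_induction with
    | base => exact hXNr
    | succ k hk ih =>
      rw [show k + 1 + r = (k + r) + 1 by ring, gaussIter_succ, gaussIter_succ, ih]
  -- the conjugate value is determined by the iterate: periodicity of Y
  have hYNr : conjOrbit x y (N + r) = conjOrbit x y N := by
    obtain ⟨h1, h2, h3, h4, h5⟩ := hinv N
    obtain ⟨h1', h2', h3', h4', h5'⟩ := hinv (N + r)
    rw [hXNr] at h2' h4'
    have hlin : ((( tripleSeq x (A,B,C) (N+r)).1 * (tripleSeq x (A,B,C) N).2.1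
        - (tripleSeq x (A,B,C) N).1 * (tripleSeq x (A,B,C) (N+r)).2.1 : ℤ):ℝ) * gaussIter x N
        + (((tripleSeq x (A,B,C) (N+r)).1 * (tripleSeq x (A,B,C) N).2.2
        - (tripleSeq x (A,B,C) N).1 * (tripleSeq x (A,B,C) (N+r)).2.2 : ℤ):ℝ) = 0 := by
      push_cast
      linear_combination ((tripleSeq x (A,B,C) (N+r)).1:ℝ) * h2
        - ((tripleSeq x (A,B,C) N).1:ℝ) * h2'
    have hcross := int_coeffs_eq_zero (irrational_gaussIter hx N) hlin
    have hcrossR : ((tripleSeq x (A,B,C) (N+r)).1:ℝ) * ((tripleSeq x (A,B,C) N).2.1:ℝ)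
        = ((tripleSeq x (A,B,C) N).1:ℝ) * ((tripleSeq x (A,B,C) (N+r)).2.1:ℝ) := by
      have : ((tripleSeq x (A,B,C) (N+r)).1 * (tripleSeq x (A,B,C) N).2.1 : ℤ)
          = (tripleSeq x (A,B,C) N).1 * (tripleSeq x (A,B,C) (N+r)).2.1 := by omega
      exact_mod_cast this
    have hsum := quad_sum h4 h2 h3
    have hsum' := quad_sum h4' h2' h3'
    have hmul : conjOrbit x y (N+r) * (((tripleSeq x (A,B,C) N).1:ℝ)
          * ((tripleSeq x (A,B,C) (N+r)).1:ℝ))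
        = conjOrbit x y N * (((tripleSeq x (A,B,C) N).1:ℝ)
          * ((tripleSeq x (A,B,C) (N+r)).1:ℝ)) := by
      linear_combination ((tripleSeq x (A,B,C) N).1:ℝ) * hsum'
        - ((tripleSeq x (A,B,C) (N+r)).1:ℝ) * hsum + hcrossR
    exact mul_right_cancel₀
      (mul_ne_zero (Int.cast_ne_zero.2 h1) (Int.cast_ne_zero.2 h1')) hmul
  have hYper : ∀ k, N ≤ k → conjOrbit x y (k + r) = conjOrbit x y k := by
    intro k hk
    induction k, hk using Nat.le_induction with
    | base => exact hYNr
    | succ k hk ih =>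
      rw [show k + 1 + r = (k + r) + 1 by ring, conjOrbit_succ, conjOrbit_succ, ih,
        hXper k hk]
  refine ⟨r, max (K+1) N, hr, le_trans (by omega) (le_max_left _ _), hYirr,
    fun k hk => hXper k (le_trans (le_max_right _ _) hk),
    fun k hk => hYper k (le_trans (le_max_right _ _) hk),
    fun k hk => hred k (le_trans (le_max_left _ _) hk)⟩

lemma quad_period_eq {x y : ℝ} {A B C : ℤ} (hx : Irrational x) (hy : Irrational y)
    (hxy : x ≠ y) (hA : A ≠ 0)
    (hqx : (A:ℝ) * x^2 + B * x + C = 0) (hqy : (A:ℝ) * y^2 + B * y + C = 0) :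
    {p | IsEventuallyPeriodicWith (cfPartialQuotient x) p}
      = {p | IsEventuallyPeriodicWith (cfPartialQuotient y) p}
    ∧ ∃ p, IsEventuallyPeriodicWith (cfPartialQuotient x) p := by
  obtain ⟨r, P, hr, hP1, hYirr, hXper, hYper, hYred⟩ := quad_main hx hy hxy hA hqx hqy
  set Y : ℕ → ℝ := conjOrbit x y with hYdef
  set W : ℕ → ℝ := fun k => -(Y k)⁻¹ with hWdef
  -- basic facts about W on the reduced zone
  have hW1 : ∀ k, P ≤ k → 1 < W k := by
    intro k hk
    obtain ⟨h1, h2⟩ := hYred k hk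
    have : W k = (-(Y k))⁻¹ := by rw [hWdef]; simp [inv_neg]
    rw [this]
    exact (one_lt_inv_iff₀).2 ⟨by linarith, by linarith⟩
  have hWval : ∀ k, P ≤ k → W (k+1) = (⌊gaussIter x k⌋ : ℝ) - Y k := by
    intro k hk
    have h1 : Y (k+1) = (Y k - (⌊gaussIter x k⌋:ℝ))⁻¹ := conjOrbit_succ x y k
    rw [hWdef]
    simp only
    rw [h1, inv_inv]
    ring
  have hWfloor : ∀ k, P ≤ k → ⌊W (k+1)⌋ = ⌊gaussIter x k⌋ := by
    intro k hk
    obtain ⟨h1, h2⟩ := hYred k hk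
    rw [hWval k hk, Int.floor_eq_iff]
    constructor <;> push_cast <;> linarith
  have hWstep : ∀ k, P ≤ k → gstep (W (k+1)) = W k := by
    intro k hk
    rw [gstep, hWfloor k hk, hWval k hk]
    rw [show (⌊gaussIter x k⌋:ℝ) - Y k - (⌊gaussIter x k⌋:ℝ) = -(Y k) by ring]
    rw [hWdef]
    simp [inv_neg]
  have hWper : ∀ k, P ≤ k → W (k + r) = W k := by
    intro k hk
    rw [hWdef]; simp only
    rw [hYper k hk]
  -- running the Gauss map on W values goes backwards
  have hback : ∀ L j, j ≤ L → gaussIter (W (P + L)) j = W (P + (L - j)) := by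
    intro L j
    induction j with
    | zero => intro _; rw [Nat.sub_zero]; exact gaussIter_zero _
    | succ j ih =>
      intro hj
      rw [gaussIter_succ, ih (by omega)]
      have h1 : L - j = (L - (j+1)) + 1 := by omega
      rw [h1, show P + (L - (j+1) + 1) = (P + (L - (j+1))) + 1 by ring]
      exact hWstep _ (by omega)
  set ω : ℝ := W (P + r) with hω
  have hωper : gaussIter ω r = ω := by
    rw [hω, hback r r (le_refl r)]
    simp [hWper P (le_refl P)]
  have hvper : ∀ j, cfPartialQuotient ω (j + r) = cfPartialQuotient ω j := by
    intro j
    unfold cfPartialQuotient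
    rw [show j + r = r + j by ring, gaussIter_add, hωper]
  have hwin : ∀ j, j < r → cfPartialQuotient ω j = cfPartialQuotient x (P + (r - 1 - j)) := by
    intro j hj
    unfold cfPartialQuotient
    rw [hω, hback r j (by omega)]
    rw [show r - j = (r - 1 - j) + 1 by omega,
      show P + (r - 1 - j + 1) = (P + (r - 1 - j)) + 1 by ring]
    exact hWfloor _ (by omega)
  -- tail sequence of x
  set u : ℕ → ℤ := fun k => cfPartialQuotient x (P + k) with hu
  have huper : ∀ k, u (k + r) = u k := by
    intro k
    rw [hu]; simp only
    unfold cfPartialQuotient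
    rw [show P + (k + r) = (P + k) + r by ring, hXper (P + k) (by omega)]
  have hrev : ∀ j, j < r → cfPartialQuotient ω j = u (r - 1 - j) := fun j hj => hwin j hj
  have hrev' : ∀ j, j < r → u j = cfPartialQuotient ω (r - 1 - j) := by
    intro j hj
    rw [hrev (r - 1 - j) (by omega), show r - 1 - (r - 1 - j) = j by omega]
  -- set equalities
  have hset1 : {p | IsEventuallyPeriodicWith (cfPartialQuotient x) p}
      = {p | IsEventuallyPeriodicWith u p} :=
    evper_set_eq_of_tail P 0 (fun k => by rw [hu]; simp)
  have hset2 : {p | IsEventuallyPeriodicWith u p}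
      = {p | IsEventuallyPeriodicWith (cfPartialQuotient ω) p} := by
    ext p
    exact ⟨fun h => evper_reverse hr huper hvper hrev p h,
      fun h => evper_reverse hr hvper huper hrev' p h⟩
  -- merging y with ω
  have hmerge1 : ∀ k, GMerge (Y k) (Y (k+1)) := by
    intro k
    have h1 : Y k = (Y (k+1))⁻¹ + (⌊gaussIter x k⌋ : ℝ) := by
      have := conjOrbit_eq_floor_add_inv (x := x) (y := y) k (hYirr k)
      rw [hYdef]; linarith [this]
    have h2 : GMerge ((Y (k+1))⁻¹ + (⌊gaussIter x k⌋:ℝ)) ((Y (k+1))⁻¹) :=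
      gmerge_add_int _ _
    rw [← h1] at h2
    exact h2.trans (gmerge_inv (hYirr (k+1)))
  have hmergeY : ∀ k, GMerge y (Y k) := by
    intro k
    induction k with
    | zero => exact GMerge.refl y
    | succ k ih => exact ih.trans (hmerge1 k)
  have hmergeω : GMerge ω (Y (P + r)) := by
    have h1 : GMerge (-(Y (P+r))⁻¹) ((Y (P+r))⁻¹) := gmerge_neg ((hYirr (P+r)).inv)
    exact h1.trans (gmerge_inv (hYirr (P+r)))
  have hsety : {p | IsEventuallyPeriodicWith (cfPartialQuotient y) p}
      = {p | IsEventuallyPeriodicWith (cfPartialQuotient ω) p} :=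
    evper_set_eq_of_gmerge ((hmergeY (P+r)).trans hmergeω.symm)
  refine ⟨by rw [hset1, hset2, hsety], ⟨r, hr, P, fun k hk => ?_⟩⟩
  unfold cfPartialQuotient
  rw [hXper k hk]

lemma irrational_of_minpoly_root {α : ℝ} (hdeg : (minpoly ℚ α).natDegree = 2)
    {z : ℝ} (hz : Polynomial.aeval z (minpoly ℚ α) = 0) : Irrational z := by
  have hint : IsIntegral ℚ α := by
    by_contra h
    rw [minpoly.eq_zero h] at hdeg
    simp at hdeg
  intro hmem
  obtain ⟨q, hq⟩ := hmem
  have hroot : (minpoly ℚ α).IsRoot q := by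
    have h1 : algebraMap ℚ ℝ q = z := by rw [← hq]; norm_num
    have h2 := Polynomial.aeval_algebraMap_apply ℝ q (minpoly ℚ α)
    rw [h1, hz] at h2
    have h3 : Polynomial.aeval q (minpoly ℚ α) = 0 := by
      have := (algebraMap ℚ ℝ).injective (by simpa using h2.symm)
      exact this
    simpa [Polynomial.aeval_def, Polynomial.eval₂_eq_eval_map] using h3
  obtain ⟨u, hu⟩ := Polynomial.dvd_iff_isRoot.2 hroot
  have hirr := minpoly.irreducible hint
  rcases hirr.isUnit_or_isUnit hu with h | h
  · exact Polynomial.not_isUnit_X_sub_C q h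
  · have h1 : (minpoly ℚ α).natDegree
        = (Polynomial.X - Polynomial.C q).natDegree + u.natDegree := by
      rw [hu, Polynomial.natDegree_mul (Polynomial.X_sub_C_ne_zero q) h.ne_zero]
    rw [Polynomial.natDegree_X_sub_C, Polynomial.natDegree_eq_zero_of_isUnit h, hdeg] at h1
    omega

lemma int_quadratic_of_minpoly {α : ℝ} (hdeg : (minpoly ℚ α).natDegree = 2) :
    ∃ A B C : ℤ, A ≠ 0 ∧ ∀ z : ℝ, Polynomial.aeval z (minpoly ℚ α) = 0 →
      (A:ℝ) * z^2 + B * z + C = 0 := by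
  have hint : IsIntegral ℚ α := by
    by_contra h
    rw [minpoly.eq_zero h] at hdeg
    simp at hdeg
  set p := minpoly ℚ α with hp
  have hmonic : p.Monic := minpoly.monic hint
  set c0 : ℚ := p.coeff 0 with hc0
  set c1 : ℚ := p.coeff 1 with hc1
  have hc2 : p.coeff 2 = 1 := by
    have := hmonic.coeff_natDegree
    rwa [hdeg] at this
  refine ⟨(c1.den : ℤ) * (c0.den : ℤ), c1.num * (c0.den : ℤ), c0.num * (c1.den : ℤ),
    mul_ne_zero (by exact_mod_cast c1.den_nz) (by exact_mod_cast c0.den_nz), ?_⟩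
  intro z hz
  have hsum := Polynomial.aeval_eq_sum_range (p := p) z
  rw [hdeg, hz] at hsum
  have hexp : (0:ℝ) = (c0:ℝ) + (c1:ℝ) * z + z^2 := by
    rw [hsum]
    rw [Finset.sum_range_succ, Finset.sum_range_succ, Finset.sum_range_one]
    rw [hc2]
    push_cast [Rat.smul_def]
    ring
  have hc1R : ((c1.num:ℝ)) = (c1:ℝ) * (c1.den:ℝ) := by
    exact_mod_cast congrArg (Rat.cast (K := ℝ)) (Rat.mul_den_eq_num c1).symm
  have hc0R : ((c0.num:ℝ)) = (c0:ℝ) * (c0.den:ℝ) := by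
    exact_mod_cast congrArg (Rat.cast (K := ℝ)) (Rat.mul_den_eq_num c0).symm
  push_cast
  linear_combination (-((c1.den:ℝ)) * (c0.den:ℝ)) * hexp + z * (c0.den:ℝ) * hc1R
    + (c1.den:ℝ) * hc0R


/-- Let `α` be a real quadratic irrational with conjugate `α′`. Then the continued
fractions of `|α|`, `|α′|`, `|1/α|` and `|1/α′|` are all eventually periodic, with
periods of the same length. -/
theorem cf_periods_same_length (α α' : ℝ)
    (hquad : (minpoly ℚ α).natDegree = 2)
    (hconj : α' ≠ α ∧ Polynomial.aeval α' (minpoly ℚ α) = 0) :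
    ((∃ p, IsEventuallyPeriodicWith (cfPartialQuotient |α|) p) ∧
      (∃ p, IsEventuallyPeriodicWith (cfPartialQuotient |α'|) p) ∧
      (∃ p, IsEventuallyPeriodicWith (cfPartialQuotient |α⁻¹|) p) ∧
      (∃ p, IsEventuallyPeriodicWith (cfPartialQuotient |α'⁻¹|) p)) ∧
    cfPeriodLength |α| = cfPeriodLength |α'| ∧
    cfPeriodLength |α'| = cfPeriodLength |α⁻¹| ∧
    cfPeriodLength |α⁻¹| = cfPeriodLength |α'⁻¹| := by
  obtain ⟨hne, hroot'⟩ := hconj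
  have hrootα : Polynomial.aeval α (minpoly ℚ α) = 0 := minpoly.aeval ℚ α
  have hαirr : Irrational α := irrational_of_minpoly_root hquad hrootα
  have hα'irr : Irrational α' := irrational_of_minpoly_root hquad hroot'
  obtain ⟨A, B, C, hA, hq⟩ := int_quadratic_of_minpoly hquad
  obtain ⟨hset, hex⟩ := quad_period_eq hαirr hα'irr (Ne.symm hne) hA (hq α hrootα)
    (hq α' hroot')
  have habs : ∀ z : ℝ, Irrational z → GMerge |z| z := by
    intro z hz
    rcases abs_choice z with h | h
    · rw [h]; exact GMerge.refl z
    · rw [h]; exact gmerge_neg hz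
  have S1 := evper_set_eq_of_gmerge (habs α hαirr)
  have S2 := evper_set_eq_of_gmerge (habs α' hα'irr)
  have S3 := evper_set_eq_of_gmerge ((habs _ hαirr.inv).trans (gmerge_inv hαirr))
  have S4 := evper_set_eq_of_gmerge ((habs _ hα'irr.inv).trans (gmerge_inv hα'irr))
  -- all four sets equal the set for α
  have E1 : {p | IsEventuallyPeriodicWith (cfPartialQuotient |α|) p}
      = {p | IsEventuallyPeriodicWith (cfPartialQuotient α) p} := S1
  have E2 : {p | IsEventuallyPeriodicWith (cfPartialQuotient |α'|) p}
      = {p | IsEventuallyPeriodicWith (cfPartialQuotient α) p} := by rw [S2, ← hset]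
  have E3 : {p | IsEventuallyPeriodicWith (cfPartialQuotient |α⁻¹|) p}
      = {p | IsEventuallyPeriodicWith (cfPartialQuotient α) p} := S3
  have E4 : {p | IsEventuallyPeriodicWith (cfPartialQuotient |α'⁻¹|) p}
      = {p | IsEventuallyPeriodicWith (cfPartialQuotient α) p} := by rw [S4, ← hset]
  obtain ⟨p₀, hp₀⟩ := hex
  have hmem : ∀ (s : Set ℕ), s = {p | IsEventuallyPeriodicWith (cfPartialQuotient α) p}
      → p₀ ∈ s := by
    intro s hs; rw [hs]; exact hp₀
  refine ⟨⟨⟨p₀, hmem _ E1⟩, ⟨p₀, hmem _ E2⟩, ⟨p₀, hmem _ E3⟩, ⟨p₀, hmem _ E4⟩⟩, ?_, ?_, ?_⟩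
  · show sInf _ = sInf _
    rw [E1, E2]
  · show sInf _ = sInf _
    rw [E2, E3]
  · show sInf _ = sInf _
    rw [E3, E4]
end

section
/- There exists a real number α > 1 such that ‖α^n‖ ≤ 2^(−n) for infinitely many positive integers n, yet α^d is not a Pisot number for any positive integer d. -/
/-- The distance from a real number to the nearest integer (denoted `‖x‖`). -/
noncomputable def nidist (x : ℝ) : ℝ := |x - round x|

/-- A Pisot number: a real algebraic integer `α > 1` all of whose Galois conjugates
different from `α` have complex absolute value strictly less than `1`. -/
def IsPisot (α : ℝ) : Prop :=
  1 < α ∧ IsIntegral ℤ α ∧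
    ∀ β : ℂ, Polynomial.aeval β (minpoly ℚ α) = 0 → β ≠ (α : ℂ) → ‖β‖ < 1


/-!
The reals `x > 1` for which `|x ^ n - m| < 2⁻¹ ^ n` holds for infinitely many `n` and integers `m`
form a residual set: for each `N` the condition with some `n ≥ N` is open, and it is dense because
every interval `(a, b)` with `1 ≤ a` contains an `n`-th root of an integer as soon as
`b ^ n - a ^ n > 1`. Liouville numbers are residual as well, so by Baire some Liouville number
`α > 1` has the approximation property. Being transcendental, no power of `α` is an algebraic
integer, let alone a Pisot number.
-/

open Set Filter Topology

lemma eventually_exists_mem_Ioo_pow_eq_intCast {a b : ℝ} (ha : 1 ≤ a) (hab : a < b) :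
    ∀ᶠ n in atTop, ∃ x ∈ Ioo a b, ∃ m : ℤ, x ^ n = m := by
  have ha₀ : 0 < a := by linarith
  have hba : 1 < b / a := (one_lt_div ha₀).2 hab
  filter_upwards [(tendsto_pow_atTop_atTop_of_one_lt hba).eventually_gt_atTop 2,
    eventually_ne_atTop 0] with n hn hn₀
  have hgap : a ^ n + 1 < b ^ n := by
    rw [div_pow, lt_div_iff₀ (by positivity)] at hn
    linarith [one_le_pow₀ (n := n) ha]
  set m : ℤ := ⌊a ^ n⌋ + 1
  have ham : a ^ n < m := by push_cast [m]; exact Int.lt_floor_add_one _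
  have hmb : (m : ℝ) < b ^ n := by push_cast [m]; linarith [Int.floor_le (a ^ n)]
  have hm₀ : (0 : ℝ) ≤ m := (pow_pos ha₀ n).le.trans ham.le
  have hroot : ((m : ℝ) ^ (n : ℝ)⁻¹) ^ n = m := Real.rpow_inv_natCast_pow hm₀ hn₀
  have hroot₀ : (0 : ℝ) ≤ (m : ℝ) ^ (n : ℝ)⁻¹ := Real.rpow_nonneg hm₀ _
  refine ⟨(m : ℝ) ^ (n : ℝ)⁻¹, ⟨?_, ?_⟩, m, hroot⟩
  · rwa [← pow_lt_pow_iff_left₀ ha₀.le hroot₀ hn₀, hroot]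
  · rwa [← pow_lt_pow_iff_left₀ hroot₀ (by linarith) hn₀, hroot]

section ApproximatePowers

variable (ε : ℕ → ℝ) (N : ℕ)

lemma isOpen_setOf_exists_abs_pow_sub_intCast_lt :
    IsOpen {x : ℝ | x < 1 ∨ ∃ n ≥ N, ∃ m : ℤ, |x ^ n - (m : ℝ)| < ε n} := by
  simp only [ofPred_or, ofPred_exists, ← exists_prop]
  exact isOpen_gt' 1 |>.union <| isOpen_iUnion fun n => isOpen_iUnion fun _ =>
    isOpen_iUnion fun m => isOpen_lt (by fun_prop) continuous_const

variable {ε}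

lemma dense_setOf_exists_abs_pow_sub_intCast_lt (hε : ∀ n, 0 < ε n) :
    Dense {x : ℝ | x < 1 ∨ ∃ n ≥ N, ∃ m : ℤ, |x ^ n - (m : ℝ)| < ε n} := by
  refine dense_of_exists_between fun a b hab => ?_
  rcases le_or_gt b 1 with hb | hb
  · exact ⟨(a + b) / 2, .inl (by linarith), by linarith, by linarith⟩
  obtain ⟨n, ⟨x, hx, m, hxm⟩, hn⟩ := ((eventually_exists_mem_Ioo_pow_eq_intCast
    (le_max_right a 1) (max_lt hab hb)).and (eventually_ge_atTop N)).exists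
  exact ⟨x, .inr ⟨n, hn, m, by simpa [hxm] using hε n⟩, (le_max_left a 1).trans_lt hx.1, hx.2⟩

lemma eventually_residual_frequently_abs_pow_sub_intCast_lt (hε : ∀ n, 0 < ε n) :
    ∀ᶠ x : ℝ in residual ℝ, 1 < x → ∃ᶠ n in atTop, ∃ m : ℤ, |x ^ n - (m : ℝ)| < ε n := by
  have hN : ∀ N, ∀ᶠ x : ℝ in residual ℝ, x < 1 ∨ ∃ n ≥ N, ∃ m : ℤ, |x ^ n - (m : ℝ)| < ε n :=
    fun N => residual_of_dense_open (isOpen_setOf_exists_abs_pow_sub_intCast_lt ε N)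
      (dense_setOf_exists_abs_pow_sub_intCast_lt N hε)
  filter_upwards [eventually_countable_forall.2 hN] with x hx hx₁
  exact frequently_atTop.2 fun N => (hx N).resolve_left hx₁.not_gt

end ApproximatePowers

lemma not_isPisot_pow_of_transcendental {x : ℝ} (hx : Transcendental ℤ x) {d : ℕ} (hd : 0 < d) :
    ¬IsPisot (x ^ d) :=
  fun h => hx (h.2.1.isAlgebraic.of_pow hd)

/-- There is a real number `α > 1` with `‖α^n‖ ≤ 2^(−n)` for infinitely many positive
integers `n`, yet no power `α^d` (`d ≥ 1`) is a Pisot number. -/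
theorem exists_real_small_fractional_parts_no_pisot_power :
    ∃ α : ℝ, 1 < α ∧ {n : ℕ | 0 < n ∧ nidist (α ^ n) ≤ (2 : ℝ)⁻¹ ^ n}.Infinite ∧
      ∀ d : ℕ, 0 < d → ¬ IsPisot (α ^ d) := by
  have hres := eventually_residual_liouville.and
    (eventually_residual_frequently_abs_pow_sub_intCast_lt (ε := fun n => (2 : ℝ)⁻¹ ^ n)
      fun n => by positivity)
  obtain ⟨α, ⟨hliouville, hsmall⟩, hα : 1 < α⟩ :=
    (dense_of_mem_residual hres).exists_mem_open isOpen_Ioi nonempty_Ioi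
  refine ⟨α, hα, Nat.frequently_atTop_iff_infinite.1 ?_,
    fun d hd => not_isPisot_pow_of_transcendental hliouville.transcendental hd⟩
  exact ((hsmall hα).and_eventually (eventually_gt_atTop 0)).mono
    fun n ⟨⟨m, hm⟩, hn⟩ => ⟨hn, (round_le _ m).trans hm.le⟩
end
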